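/- arXiv:1111.5479 — 8 statements merged into one kernel-verified Lean document; each statement's English description precedes it below -/
import Mathlib

section
/- If Θ is a p×p symmetric positive definite matrix minimizing f(Θ) = -log det Θ + tr(SΘ) + λ‖Θ‖₁ over positive definite matrices, with λ > 0 and S symmetric, then the diagonal entries of W = Θ⁻¹ satisfy wᵢᵢ = sᵢᵢ + λ for all i. -/
open Matrix

theorem stmt2 {p : ℕ} (S Θ : Matrix (Fin p) (Fin p) ℝ) (lam : ℝ)
    (hS : S.IsSymm) (hlam : 0 < lam) (hΘ : Θ.PosDef)
    (hmin : ∀ Θ' : Matrix (Fin p) (Fin p) ℝ, Θ'.PosDef →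
      (-Real.log Θ.det + (S * Θ).trace + lam * ∑ i, ∑ j, |Θ i j|) ≤
      (-Real.log Θ'.det + (S * Θ').trace + lam * ∑ i, ∑ j, |Θ' i j|)) :
    ∀ i, Θ⁻¹ i i = S i i + lam := by
  intro i
  have hd : 0 < Θ.det := hΘ.det_pos
  set E : Matrix (Fin p) (Fin p) ℝ := Matrix.single i i 1 with hE
  set c : ℝ := Θ.adjugate i i with hc
  set d : ℝ := Θ.det with hdd
  -- diagonal entry positive
  have hΘii : 0 < Θ i i := by
    have h := hΘ.dotProduct_mulVec_pos (x := Pi.single i 1) (by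
      simp [Function.ne_iff])
    simpa [dotProduct, Matrix.mulVec, Pi.single_apply, Finset.sum_ite_eq] using h
  -- minimum of quadratic form on sphere
  haveI : Nonempty (Fin p) := ⟨i⟩
  have hne : (Metric.sphere (0 : Fin p → ℝ) 1).Nonempty :=
    NormedSpace.sphere_nonempty.2 zero_le_one
  have hqcont : Continuous fun x : Fin p → ℝ => x ⬝ᵥ (Θ *ᵥ x) := by
    have heq : (fun x : Fin p → ℝ => x ⬝ᵥ (Θ *ᵥ x))
        = fun x : Fin p → ℝ => ∑ a, ∑ b, x a * (Θ a b * x b) := by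
      funext x
      simp [dotProduct, Matrix.mulVec, Finset.mul_sum]
    rw [heq]
    fun_prop
  obtain ⟨x₀, hx₀s, hx₀min⟩ :=
    (isCompact_sphere (0 : Fin p → ℝ) 1).exists_isMinOn hne hqcont.continuousOn
  set μ : ℝ := x₀ ⬝ᵥ (Θ *ᵥ x₀) with hμ
  have hx₀ne : x₀ ≠ 0 := by
    intro h
    rw [h] at hx₀s
    simp at hx₀s
  have hμpos : 0 < μ := by simpa using hΘ.dotProduct_mulVec_pos hx₀ne
  have hq_lb : ∀ x : Fin p → ℝ, μ * ‖x‖ ^ 2 ≤ x ⬝ᵥ (Θ *ᵥ x) := by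
    intro x
    rcases eq_or_ne x 0 with rfl | hx
    · simp
    · have hnorm : 0 < ‖x‖ := norm_pos_iff.2 hx
      have hmem : ‖x‖⁻¹ • x ∈ Metric.sphere (0 : Fin p → ℝ) 1 := by
        simp [norm_smul, abs_of_pos (inv_pos.2 hnorm), inv_mul_cancel₀ hnorm.ne']
      have hle := isMinOn_iff.mp hx₀min _ hmem
      have hhom : (‖x‖⁻¹ • x) ⬝ᵥ (Θ *ᵥ (‖x‖⁻¹ • x))
          = ‖x‖⁻¹ * (‖x‖⁻¹ * (x ⬝ᵥ (Θ *ᵥ x))) := by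
        rw [Matrix.mulVec_smul, smul_dotProduct, dotProduct_smul]
        simp [smul_eq_mul]
      rw [hhom] at hle
      have h2 := mul_le_mul_of_nonneg_right hle (by positivity : (0:ℝ) ≤ ‖x‖ ^ 2)
      have hcancel : ‖x‖⁻¹ * ‖x‖ = 1 := inv_mul_cancel₀ hnorm.ne'
      calc μ * ‖x‖ ^ 2 ≤ ‖x‖⁻¹ * (‖x‖⁻¹ * (x ⬝ᵥ (Θ *ᵥ x))) * ‖x‖ ^ 2 := h2
        _ = (‖x‖⁻¹ * ‖x‖) * ((‖x‖⁻¹ * ‖x‖) * (x ⬝ᵥ (Θ *ᵥ x))) := by ring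
        _ = x ⬝ᵥ (Θ *ᵥ x) := by rw [hcancel]; ring
  set δ : ℝ := min μ (Θ i i) with hδ
  have hδpos : 0 < δ := lt_min hμpos hΘii
  -- PosDef for small perturbations
  have hPD : ∀ t : ℝ, |t| < δ → (Θ + t • E).PosDef := by
    intro t ht
    have htμ : |t| < μ := lt_of_lt_of_le ht (min_le_left _ _)
    refine Matrix.PosDef.of_dotProduct_mulVec_pos ?_ ?_
    · have hEH : (t • E).IsHermitian := by
        ext a b
        simp [hE, Matrix.conjTranspose_apply, Matrix.single, and_comm]
      exact hΘ.1.add hEH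
    · intro x hx
      have hnorm : 0 < ‖x‖ := norm_pos_iff.2 hx
      have hquad : star x ⬝ᵥ ((Θ + t • E) *ᵥ x) = x ⬝ᵥ (Θ *ᵥ x) + t * (x i * x i) := by
        rw [Matrix.add_mulVec, dotProduct_add, Matrix.smul_mulVec,
          dotProduct_smul]
        have hEx : x ⬝ᵥ (E *ᵥ x) = x i * x i := by
          simp [hE, dotProduct, Matrix.mulVec, Matrix.single,
            ite_and, Finset.sum_ite_eq, mul_comm]
        simp [hEx, smul_eq_mul]
      rw [hquad]
      have hxi : |x i| ≤ ‖x‖ := by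
        have := norm_le_pi_norm x i
        simpa [Real.norm_eq_abs] using this
      have hxi2 : x i * x i ≤ ‖x‖ ^ 2 := by nlinarith [abs_nonneg (x i), sq_abs (x i)]
      have hlb := hq_lb x
      nlinarith [neg_abs_le t, sq_nonneg (x i), mul_pos (sub_pos.2 htμ) (pow_pos hnorm 2),
        abs_nonneg t, sq_abs (x i)]
  -- determinant formula
  have hdet : ∀ t : ℝ, (Θ + t • E).det = d + t * c := by
    intro t
    have hrow : Θ + t • E = Θ.updateRow i (Θ i + t • (Pi.single i 1 : Fin p → ℝ)) := by
      ext a b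
      by_cases ha : a = i
      · subst ha
        simp [hE, Matrix.updateRow_self, Matrix.single, Pi.single_apply, eq_comm]
      · simp [hE, Matrix.updateRow_ne ha, Matrix.single, ha, Ne.symm ha]
    rw [hrow, Matrix.det_updateRow_add, Matrix.det_updateRow_smul, Matrix.updateRow_eq_self,
      ← Matrix.adjugate_apply]
  -- trace formula
  have htr : ∀ t : ℝ, (S * (Θ + t • E)).trace = (S * Θ).trace + t * S i i := by
    intro t
    rw [Matrix.mul_add, Matrix.trace_add, Matrix.mul_smul, Matrix.trace_smul]
    congr 1
    have hSE : (S * E).trace = S i i := by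
      have hdiag : ∀ b, (S * E) b b = if b = i then S i i else 0 := by
        intro b
        by_cases hb : b = i
        · subst hb; simp [hE]
        · simp [hE, hb]
      rw [Matrix.trace]
      simp [Matrix.diag_apply, hdiag, Finset.sum_ite_eq']
    rw [hSE, smul_eq_mul]
  -- absolute value sum formula
  have habs : ∀ t : ℝ, |t| < δ →
      (∑ a, ∑ b, |(Θ + t • E) a b|) = (∑ a, ∑ b, |Θ a b|) + t := by
    intro t ht
    have htii : |t| < Θ i i := lt_of_lt_of_le ht (min_le_right _ _)
    have h1 : ∀ a b, |(Θ + t • E) a b| = |Θ a b| + (if a = i ∧ b = i then t else 0) := by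
      intro a b
      by_cases h : a = i ∧ b = i
      · rw [if_pos h]
        have he : (Θ + t • E) a b = Θ a b + t := by simp [hE, h.1, h.2]
        have hab : Θ a b = Θ i i := by rw [h.1, h.2]
        have h9 := abs_lt.mp htii
        rw [he, hab, abs_of_pos hΘii, abs_of_pos (by linarith [h9.1, h9.2])]
      · have h' : ¬(i = a ∧ i = b) := fun ⟨x, y⟩ => h ⟨x.symm, y.symm⟩
        rw [if_neg h]
        simp [hE, Matrix.add_apply, h']
    simp_rw [h1, Finset.sum_add_distrib]
    congr 1
    simp [ite_and, Finset.sum_ite_eq, Finset.sum_ite_eq']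
  -- the 1-D function
  set φ : ℝ → ℝ := fun t => -Real.log (d + t * c) + t * (S i i + lam) with hφ
  have hlocal : IsLocalMin φ 0 := by
    have : ∀ᶠ t in nhds (0:ℝ), φ 0 ≤ φ t := by
      refine Metric.eventually_nhds_iff.2 ⟨δ, hδpos, ?_⟩
      intro t hdist
      have ht : |t| < δ := by simpa [Real.dist_eq] using hdist
      have h := hmin _ (hPD t ht)
      rw [hdet t, htr t, habs t ht] at h
      have h0 : φ 0 = -Real.log d := by simp [hφ]
      have hφt : φ t = -Real.log (d + t * c) + t * (S i i + lam) := rfl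
      rw [h0, hφt]
      nlinarith [h]
    exact this
  have hderiv : HasDerivAt φ (-(c / d) + (S i i + lam)) 0 := by
    have h1 : HasDerivAt (fun t : ℝ => d + t * c) c 0 := by
      simpa using (hasDerivAt_mul_const c).const_add d
    have h2 : HasDerivAt (fun t : ℝ => Real.log (d + t * c)) (c / d) 0 := by
      have h3 := h1.log (by simpa using hd.ne')
      simpa using h3
    exact h2.neg.add (hasDerivAt_mul_const (S i i + lam))
  have hzero := hlocal.hasDerivAt_eq_zero hderiv
  have hcd : c / d = S i i + lam := by linarith
  have hinv : Θ⁻¹ i i = d⁻¹ * c := by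
    rw [Matrix.inv_def, Matrix.smul_apply, Ring.inverse_eq_inv, smul_eq_mul, ← hc, ← hdd]
  rw [hinv, ← hcd, div_eq_inv_mul]
end

section
/- Let S be symmetric and λ > 0. A symmetric positive definite matrix Θ satisfies the stationarity condition -Θ⁻¹ + S + λΓ = 0 with Γ ∈ Sign(Θ) element-wise if and only if the matrix Γ̃ = λΓ satisfies ‖Γ̃‖_∞ ≤ λ, S + Γ̃ = Θ⁻¹, and the KKT conditions of the dual problem: maximize log det(S + Γ̃) + p subject to ‖Γ̃‖_∞ ≤ λ, with complementary slackness P * (|Γ̃| - λ11ᵀ) = 0 where P = |Θ| (element-wise absolute value) and Θ = P * sgn(Γ̃) element-wise. -/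
open Matrix

/-- The element-wise sign set: `{sign t}` if `t ≠ 0`, and `[-1, 1]` if `t = 0`. -/
def signSet (t : ℝ) : Set ℝ := if t = 0 then Set.Icc (-1) 1 else {Real.sign t}

lemma sign_abs_le (t : ℝ) : |Real.sign t| ≤ 1 := by
  rcases lt_trichotomy t 0 with h | h | h
  · simp [Real.sign_of_neg h]
  · simp [h]
  · simp [Real.sign_of_pos h]

lemma eq_sign_of_abs_eq_one {t : ℝ} (h : |t| = 1) : t = Real.sign t := by
  rcases abs_eq (by norm_num : (0:ℝ) ≤ 1) |>.mp h with h1 | h1 <;>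
    simp [h1, Real.sign_of_pos, Real.sign_of_neg, show (-1:ℝ) < 0 by norm_num]

theorem stmt4 {p : ℕ} (S Θ : Matrix (Fin p) (Fin p) ℝ) (lam : ℝ)
    (hS : S.IsSymm) (hlam : 0 < lam) (hΘ : Θ.PosDef)
    (Γ : Matrix (Fin p) (Fin p) ℝ) :
    ((∀ i j, Γ i j ∈ signSet (Θ i j)) ∧ -Θ⁻¹ + S + lam • Γ = 0) ↔
    ((∀ i j, |(lam • Γ) i j| ≤ lam) ∧ S + lam • Γ = Θ⁻¹ ∧
      ∃ P : Matrix (Fin p) (Fin p) ℝ,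
        (∀ i j, P i j = |Θ i j|) ∧
        (∀ i j, -((S + lam • Γ)⁻¹) i j + P i j * Real.sign ((lam • Γ) i j) = 0) ∧
        (∀ i j, P i j * (|(lam • Γ) i j| - lam) = 0)) := by
  have hinv : Θ⁻¹⁻¹ = Θ := Matrix.nonsing_inv_nonsing_inv Θ (isUnit_iff_ne_zero.mpr hΘ.det_pos.ne')
  have hΓabs : ∀ i j, (∀ i j, Γ i j ∈ signSet (Θ i j)) → |Γ i j| ≤ 1 := by
    intro i j h
    have := h i j
    unfold signSet at this
    split_ifs at this with h0
    · exact abs_le.mpr ⟨this.1, this.2⟩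
    · simp only [Set.mem_singleton_iff] at this
      rw [this]; exact sign_abs_le _
  constructor
  · rintro ⟨hsgn, hstat⟩
    have heq : S + lam • Γ = Θ⁻¹ := by
      have := hstat
      have : S + lam • Γ = Θ⁻¹ := by
        have h' : -Θ⁻¹ + (S + lam • Γ) = 0 := by rw [← add_assoc]; exact hstat
        linear_combination (norm := abel) h'
      exact this
    refine ⟨?_, heq, ?_⟩
    · intro i j
      have h1 := hΓabs i j hsgn
      simp only [Matrix.smul_apply, smul_eq_mul, abs_mul, abs_of_pos hlam]
      calc lam * |Γ i j| ≤ lam * 1 := by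
            exact mul_le_mul_of_nonneg_left h1 hlam.le
        _ = lam := mul_one lam
    · refine ⟨fun i j => |Θ i j|, fun i j => rfl, ?_, ?_⟩
      · intro i j
        rw [heq, hinv]
        have hs := hsgn i j
        unfold signSet at hs
        split_ifs at hs with h0
        · simp [h0]
        · simp only [Set.mem_singleton_iff] at hs
          have hsg : Real.sign ((lam • Γ) i j) = Real.sign (Θ i j) := by
            simp only [Matrix.smul_apply, smul_eq_mul, hs]
            rcases lt_trichotomy (Θ i j) 0 with h | h | h
            · rw [Real.sign_of_neg h]
              rw [Real.sign_of_neg (by nlinarith [Real.sign_of_neg h])]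
            · exact absurd h h0
            · rw [Real.sign_of_pos h]
              rw [Real.sign_of_pos (by nlinarith [Real.sign_of_pos h])]
          rw [hsg]
          rcases lt_trichotomy (Θ i j) 0 with h | h | h
          · rw [Real.sign_of_neg h]; simp only [abs_of_neg h]; ring
          · exact absurd h h0
          · rw [Real.sign_of_pos h]; simp only [abs_of_pos h]; ring
      · intro i j
        have hs := hsgn i j
        unfold signSet at hs
        split_ifs at hs with h0
        · simp [h0]
        · simp only [Set.mem_singleton_iff] at hs
          have : |(lam • Γ) i j| = lam := by
            simp only [Matrix.smul_apply, smul_eq_mul, abs_mul, abs_of_pos hlam, hs]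
            rcases lt_trichotomy (Θ i j) 0 with h | h | h
            · rw [Real.sign_of_neg h]; norm_num
            · exact absurd h h0
            · rw [Real.sign_of_pos h]; norm_num
          rw [this]; ring
  · rintro ⟨hbound, heq, P, hP, hkkt, hcs⟩
    constructor
    · intro i j
      have hk := hkkt i j
      rw [heq, hinv, hP] at hk
      have hΘeq : Θ i j = |Θ i j| * Real.sign ((lam • Γ) i j) := by linarith
      unfold signSet
      split_ifs with h0
      · have hb := hbound i j
        simp only [Matrix.smul_apply, smul_eq_mul, abs_mul, abs_of_pos hlam] at hb
        have : |Γ i j| ≤ 1 := by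
          by_contra hc
          push_neg at hc
          nlinarith
        exact abs_le.mp this |> fun ⟨a, b⟩ => ⟨a, b⟩
      · have hc := hcs i j
        rw [hP] at hc
        have habs : |(lam • Γ) i j| = lam := by
          have : |Θ i j| ≠ 0 := abs_ne_zero.mpr h0
          have := mul_eq_zero.mp hc
          rcases this with h | h
          · exact absurd h ‹|Θ i j| ≠ 0›
          · linarith
        have hΓ1 : |Γ i j| = 1 := by
          simp only [Matrix.smul_apply, smul_eq_mul, abs_mul, abs_of_pos hlam] at habs
          have := mul_left_cancel₀ hlam.ne' (habs.trans (mul_one lam).symm)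
          exact this
        have hsgΓ : Real.sign ((lam • Γ) i j) = Real.sign (Γ i j) := by
          simp only [Matrix.smul_apply, smul_eq_mul]
          rcases lt_trichotomy (Γ i j) 0 with h | h | h
          · rw [Real.sign_of_neg h, Real.sign_of_neg (by nlinarith)]
          · simp [h]
          · rw [Real.sign_of_pos h, Real.sign_of_pos (by nlinarith)]
        simp only [Set.mem_singleton_iff]
        have habspos : 0 < |Θ i j| := abs_pos.mpr h0
        rcases abs_eq (by norm_num : (0:ℝ) ≤ 1) |>.mp hΓ1 with h1 | h1
        · have hsg1 : Real.sign (Γ i j) = 1 := by rw [h1]; exact Real.sign_of_pos one_pos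
          have hT : Θ i j = |Θ i j| := by rw [hsgΓ, hsg1, mul_one] at hΘeq; exact hΘeq
          have hpos : 0 < Θ i j := by linarith
          rw [Real.sign_of_pos hpos, h1]
        · have hsg1 : Real.sign (Γ i j) = -1 := by
            rw [h1]; exact Real.sign_of_neg (by norm_num)
          have hT : Θ i j = -|Θ i j| := by rw [hsgΓ, hsg1, mul_neg_one] at hΘeq; exact hΘeq
          have hneg : Θ i j < 0 := by linarith
          rw [Real.sign_of_neg hneg, h1]
    · rw [← heq]; abel
end

section
/- Let W₁₁ ≻ 0 be (p-1)×(p-1), s₁₂ ∈ ℝ^{p-1}, λ > 0. If β̂ minimizes (1/2)βᵀW₁₁β + βᵀs₁₂ + λ‖β‖₁ with subgradient certificate γ̂₁₂ ∈ Sign(β̂) satisfying W₁₁β̂ + s₁₂ + λγ̂₁₂ = 0, then γ̃ = λγ̂₁₂ minimizes the box-constrained QP (1/2)(s₁₂ + γ)ᵀW₁₁⁻¹(s₁₂ + γ) subject to ‖γ‖_∞ ≤ λ, and moreover β̂ = -W₁₁⁻¹(s₁₂ + γ̃). -/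
open Matrix

lemma signSet_abs_le {t g : ℝ} (h : g ∈ signSet t) : |g| ≤ 1 := by
  unfold signSet at h
  split_ifs at h with ht
  · exact abs_le.2 ⟨h.1, h.2⟩
  · rcases lt_or_gt_of_ne ht with h' | h'
    · simp [Set.mem_singleton_iff.1 h, Real.sign_of_neg h']
    · simp [Set.mem_singleton_iff.1 h, Real.sign_of_pos h']

lemma signSet_mul {t g : ℝ} (h : g ∈ signSet t) : t * g = |t| := by
  unfold signSet at h
  split_ifs at h with ht
  · simp [ht]
  · rcases lt_or_gt_of_ne ht with h' | h'
    · rw [Set.mem_singleton_iff.1 h, Real.sign_of_neg h', abs_of_neg h']; ring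
    · rw [Set.mem_singleton_iff.1 h, Real.sign_of_pos h', abs_of_pos h']; ring

lemma dot_expand {n : Type*} [Fintype n] {A : Matrix n n ℝ} (hA : Aᵀ = A) (u w : n → ℝ) :
    (u + w) ⬝ᵥ A *ᵥ (u + w) = u ⬝ᵥ A *ᵥ u + 2 * (w ⬝ᵥ A *ᵥ u) + w ⬝ᵥ A *ᵥ w := by
  have hsym : u ⬝ᵥ A *ᵥ w = w ⬝ᵥ A *ᵥ u := by
    rw [dotProduct_mulVec, ← mulVec_transpose, hA, dotProduct_comm]
  rw [mulVec_add, dotProduct_add, add_dotProduct, add_dotProduct, hsym]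
  ring

lemma dot_symm {n : Type*} [Fintype n] {A : Matrix n n ℝ} (hA : Aᵀ = A) (x y : n → ℝ) :
    x ⬝ᵥ A *ᵥ y = y ⬝ᵥ A *ᵥ x := by
  rw [dotProduct_mulVec, ← mulVec_transpose, hA, dotProduct_comm]

theorem stmt6 {q : ℕ} (W : Matrix (Fin q) (Fin q) ℝ) (s : Fin q → ℝ) (lam : ℝ)
    (hW : W.PosDef) (hlam : 0 < lam) (β γ : Fin q → ℝ)
    (hsign : ∀ i, γ i ∈ signSet (β i))
    (hstat : W.mulVec β + s + lam • γ = 0) :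
    (∀ i, |(lam • γ) i| ≤ lam) ∧
    (∀ v : Fin q → ℝ, (∀ i, |v i| ≤ lam) →
      (1/2) * ((s + lam • γ) ⬝ᵥ W⁻¹.mulVec (s + lam • γ)) ≤
      (1/2) * ((s + v) ⬝ᵥ W⁻¹.mulVec (s + v))) ∧
    β = -(W⁻¹.mulVec (s + lam • γ)) := by
  have hdet : IsUnit W.det := isUnit_iff_ne_zero.2 (ne_of_gt hW.det_pos)
  have hsv : s + lam • γ = -(W *ᵥ β) :=
    eq_neg_of_add_eq_zero_right (by rw [← add_assoc]; exact hstat)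
  have hinv : W⁻¹ *ᵥ (s + lam • γ) = -β := by
    rw [hsv, mulVec_neg, mulVec_mulVec, nonsing_inv_mul W hdet, one_mulVec]
  have hA : (W⁻¹).PosDef := hW.inv
  have hAt : (W⁻¹)ᵀ = W⁻¹ := by
    have := hA.isHermitian; rwa [IsHermitian, conjTranspose_eq_transpose_of_trivial] at this
  refine ⟨?_, ?_, ?_⟩
  · intro i
    have h1 : |γ i| ≤ 1 := signSet_abs_le (hsign i)
    have : |(lam • γ) i| = lam * |γ i| := by
      simp [abs_mul, abs_of_pos hlam]
    rw [this]
    nlinarith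
  · intro v hv
    set u := s + lam • γ with hu
    set w := v - lam • γ with hwdef
    have hsvw : s + v = u + w := by rw [hu, hwdef]; abel
    have hexp : (s + v) ⬝ᵥ W⁻¹ *ᵥ (s + v)
        = u ⬝ᵥ W⁻¹ *ᵥ u + 2 * (w ⬝ᵥ W⁻¹ *ᵥ u) + w ⬝ᵥ W⁻¹ *ᵥ w := by
      rw [hsvw]; exact dot_expand hAt u w
    have hww : 0 ≤ w ⬝ᵥ W⁻¹ *ᵥ w := by
      have := hA.posSemidef.dotProduct_mulVec_nonneg w
      simpa using this
    have hwu : 0 ≤ w ⬝ᵥ W⁻¹ *ᵥ u := by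
      rw [hinv]
      have : w ⬝ᵥ (-β) = ∑ i, (lam * |β i| - v i * β i) := by
        rw [hwdef]
        simp only [dotProduct, Pi.neg_apply, Pi.sub_apply, Pi.smul_apply, smul_eq_mul]
        refine Finset.sum_congr rfl fun i _ => ?_
        have := signSet_mul (hsign i)
        nlinarith [this]
      rw [this]
      apply Finset.sum_nonneg
      intro i _
      have h1 : v i * β i ≤ lam * |β i| := by
        calc v i * β i ≤ |v i * β i| := le_abs_self _
        _ = |v i| * |β i| := abs_mul _ _
        _ ≤ lam * |β i| := by
            apply mul_le_mul_of_nonneg_right (hv i) (abs_nonneg _)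
      linarith
    rw [hexp]
    nlinarith
  · rw [hinv, neg_neg]
end

section
/- Let W₁₁ ≻ 0, s₁₂ ∈ ℝ^{p-1}, λ > 0. If γ̃ with ‖γ̃‖_∞ ≤ λ satisfies the KKT conditions of the box-constrained QP minimize (1/2)(s₁₂+γ)ᵀW₁₁⁻¹(s₁₂+γ) subject to ‖γ‖_∞ ≤ λ — i.e. there exists p̃ ≥ 0 (componentwise) with W₁₁⁻¹(s₁₂+γ̃) + p̃ * sgn(γ̃) = 0 and p̃ᵢ(|γ̃ᵢ| - λ) = 0 for all i — then β̂ = p̃ * sgn(γ̃) (element-wise) satisfies the lasso stationarity condition W₁₁β̂ + s₁₂ + λγ̂ = 0 with γ̂ = γ̃/λ ∈ Sign(β̂). -/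
open Matrix

theorem stmt7 {q : ℕ} (W : Matrix (Fin q) (Fin q) ℝ) (s : Fin q → ℝ) (lam : ℝ)
    (hW : W.PosDef) (hlam : 0 < lam) (γt pt : Fin q → ℝ)
    (hfeas : ∀ i, |γt i| ≤ lam) (hpt : ∀ i, 0 ≤ pt i)
    (hkkt1 : W⁻¹.mulVec (s + γt) + (fun i => pt i * Real.sign (γt i)) = 0)
    (hkkt2 : ∀ i, pt i * (|γt i| - lam) = 0) :
    W.mulVec (fun i => pt i * Real.sign (γt i)) + s + lam • (lam⁻¹ • γt) = 0 ∧
    ∀ i, (lam⁻¹ • γt) i ∈ signSet (pt i * Real.sign (γt i)) := by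
  have hlam' : lam ≠ 0 := ne_of_gt hlam
  have hWinv : IsUnit W.det := hW.det_pos.ne'.isUnit
  constructor
  · have h1 : W⁻¹.mulVec (s + γt) = -(fun i => pt i * Real.sign (γt i)) := by
      have := hkkt1
      funext i
      have := congrFun hkkt1 i
      simp only [Pi.add_apply, Pi.neg_apply, Pi.zero_apply] at this ⊢
      linarith
    have h2 : W.mulVec (W⁻¹.mulVec (s + γt)) = s + γt := by
      rw [mulVec_mulVec, Matrix.mul_nonsing_inv _ hWinv, one_mulVec]
    rw [h1] at h2
    have h3 : lam • (lam⁻¹ • γt) = γt := by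
      rw [smul_smul, mul_inv_cancel₀ hlam', one_smul]
    rw [h3]
    funext i
    have := congrFun h2 i
    simp only [mulVec_neg, Pi.neg_apply, Pi.add_apply, Pi.zero_apply] at this ⊢
    linarith
  · intro i
    simp only [Pi.smul_apply, smul_eq_mul, signSet]
    by_cases h : pt i * Real.sign (γt i) = 0
    · rw [if_pos h]
      constructor
      · rw [neg_le, ← neg_mul]
        calc -(lam⁻¹) * γt i ≤ |lam⁻¹ * γt i| := by rw [← abs_neg, neg_mul]; exact le_abs_self _
          _ ≤ 1 := by
            rw [abs_mul, abs_of_pos (inv_pos.mpr hlam)]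
            rw [← inv_mul_cancel₀ hlam']
            exact mul_le_mul_of_nonneg_left (hfeas i) (le_of_lt (inv_pos.mpr hlam))
      · calc lam⁻¹ * γt i ≤ |lam⁻¹ * γt i| := le_abs_self _
          _ ≤ 1 := by
            rw [abs_mul, abs_of_pos (inv_pos.mpr hlam)]
            rw [← inv_mul_cancel₀ hlam']
            exact mul_le_mul_of_nonneg_left (hfeas i) (le_of_lt (inv_pos.mpr hlam))
    · rw [if_neg h]
      have hp : pt i ≠ 0 := fun hp0 => h (by rw [hp0, zero_mul])
      have hpp : 0 < pt i := lt_of_le_of_ne (hpt i) (Ne.symm hp)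
      have hg : γt i ≠ 0 := by
        intro hg0
        apply h
        rw [hg0, Real.sign_zero, mul_zero]
      have habs : |γt i| = lam := by
        have := hkkt2 i
        rcases mul_eq_zero.mp this with h1 | h1
        · exact absurd h1 hp
        · linarith [sub_eq_zero.mp h1]
      rcases lt_or_gt_of_ne hg with hneg | hpos
      · have hs : Real.sign (γt i) = -1 := Real.sign_of_neg hneg
        have : γt i = -lam := by
          rw [abs_of_neg hneg] at habs; linarith
        rw [hs, this, Set.mem_singleton_iff]
        have : pt i * (-1 : ℝ) < 0 := by linarith
        rw [Real.sign_of_neg this]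
        field_simp
      · have hs : Real.sign (γt i) = 1 := Real.sign_of_pos hpos
        have : γt i = lam := by rw [abs_of_pos hpos] at habs; linarith
        rw [hs, this, Set.mem_singleton_iff]
        have : (0:ℝ) < pt i * 1 := by linarith
        rw [Real.sign_of_pos this]
        field_simp
end

section
/- Let S be a p×p symmetric matrix, λ > 0, and let Z be a symmetric positive definite p×p matrix with ‖Z - S‖_∞ ≤ λ. Partition Z, S conformally with (p-1)×(p-1) leading block. Suppose the last row/column of Z is updated by setting ŵ₂₂ = s₂₂ + λ and ŵ₁₂ = s₁₂ + γ̂ where γ̂ minimizes (1/2)(s₁₂+γ)ᵀZ₁₁⁻¹(s₁₂+γ) over ‖γ‖_∞ ≤ λ (with ŵ₂₁ = ŵ₁₂ᵀ and Z₁₁ unchanged). Then the updated matrix Ŵ is positive definite. -/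
open Matrix

theorem stmt8 {n : ℕ} (S Z : Matrix (Fin n ⊕ Unit) (Fin n ⊕ Unit) ℝ) (lam : ℝ)
    (hS : S.IsSymm) (hlam : 0 < lam) (hZ : Z.PosDef)
    (hfeas : ∀ i j, |Z i j - S i j| ≤ lam)
    (γ : Fin n → ℝ)
    (hγfeas : ∀ i, |γ i| ≤ lam)
    (hγopt : ∀ γ' : Fin n → ℝ, (∀ i, |γ' i| ≤ lam) →
      (1/2) * (((fun i => S (Sum.inl i) (Sum.inr ())) + γ) ⬝ᵥ
        (Z.toBlocks₁₁)⁻¹.mulVec ((fun i => S (Sum.inl i) (Sum.inr ())) + γ)) ≤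
      (1/2) * (((fun i => S (Sum.inl i) (Sum.inr ())) + γ') ⬝ᵥ
        (Z.toBlocks₁₁)⁻¹.mulVec ((fun i => S (Sum.inl i) (Sum.inr ())) + γ'))) :
    (Matrix.fromBlocks Z.toBlocks₁₁
      (Matrix.of fun i (_ : Unit) => S (Sum.inl i) (Sum.inr ()) + γ i)
      (Matrix.of fun (_ : Unit) j => S (Sum.inl j) (Sum.inr ()) + γ j)
      (Matrix.of fun (_ : Unit) (_ : Unit) =>
        S (Sum.inr ()) (Sum.inr ()) + lam)).PosDef := by
  classical
  set A := Z.toBlocks₁₁ with hAdef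
  set u : Fin n → ℝ := fun i => Z (Sum.inl i) (Sum.inr ()) with hu
  set s : Fin n → ℝ := fun i => S (Sum.inl i) (Sum.inr ()) with hs
  set b : Fin n → ℝ := fun i => s i + γ i with hb
  set z22 : ℝ := Z (Sum.inr ()) (Sum.inr ()) with hz22
  set d : ℝ := S (Sum.inr ()) (Sum.inr ()) + lam with hd
  -- Z as a block matrix
  have hfrom : Z = fromBlocks A (replicateCol Unit u) (replicateCol Unit u)ᴴ
      (of fun _ _ => z22) := by
    ext i j
    rcases i with i | i <;> rcases j with j | j
    · rfl
    · rfl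
    · simp only [fromBlocks_apply₂₁, conjTranspose_apply, replicateCol_apply, star_trivial, of_apply]
      rw [← hZ.1.apply]
      rfl
    · rfl
  -- A is positive definite
  have hA : A.PosDef := by
    refine posDef_iff_dotProduct_mulVec.mpr ⟨?_, ?_⟩
    · ext i j
      simp only [conjTranspose_apply, star_trivial, hAdef, toBlocks₁₁, of_apply]
      rw [← hZ.1.apply]
      rfl
    · intro x hx
      have hne : (x ⊕ᵥ (0 : Unit → ℝ)) ≠ 0 := by
        intro h
        apply hx
        funext i
        exact congrFun h (Sum.inl i)
      have h := hZ.dotProduct_mulVec_pos hne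
      rw [hfrom] at h
      simpa [fromBlocks_mulVec, Function.star_sumElim, sumElim_dotProduct_sumElim] using h
  haveI : Invertible A := hA.isUnit.invertible
  -- quadratic form on Unit blocks
  have hsymm : ∀ i j, A⁻¹ i j = A⁻¹ j i := fun i j => by
    rw [← hA.1.inv.apply i j, star_trivial]
  have hq : ∀ v : Fin n → ℝ, ((replicateCol Unit v)ᴴ * A⁻¹ * replicateCol Unit v) () () = v ⬝ᵥ A⁻¹ *ᵥ v := by
    intro v
    simp only [Matrix.mul_apply, conjTranspose_apply, replicateCol_apply, star_trivial, dotProduct,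
      mulVec, Finset.sum_mul, Finset.mul_sum, Finset.univ_unique, Finset.sum_singleton]
    refine Finset.sum_congr rfl fun x _ => Finset.sum_congr rfl fun i _ => ?_
    rw [hsymm i x]
    ring
  have hval0 : ∀ (M : Matrix Unit Unit ℝ) (y : Unit → ℝ),
      star y ᵥ* M ⬝ᵥ y = y () * y () * M () () := by
    intro M y
    simp only [vecMul, dotProduct, Finset.univ_unique, Finset.sum_singleton, star_trivial,
      Pi.star_apply]
    ring
  -- Schur complement of Z is positive
  have hschurZ : 0 < z22 - u ⬝ᵥ A⁻¹ *ᵥ u := by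
    set t : Unit → ℝ := fun _ => 1 with ht
    have hne : ((-((A⁻¹ * replicateCol Unit u) *ᵥ t)) ⊕ᵥ t) ≠ 0 := by
      intro h
      have := congrFun h (Sum.inr ())
      simp [ht] at this
    have h := hZ.dotProduct_mulVec_pos hne
    rw [hfrom, dotProduct_mulVec,
      schur_complement_eq₁₁ (replicateCol Unit u) (of fun _ _ => z22) _ _ hA.1] at h
    have h0 : (-((A⁻¹ * replicateCol Unit u) *ᵥ t) + (A⁻¹ * replicateCol Unit u) *ᵥ t) = 0 := by
      simp
    rw [h0] at h
    simp only [star_zero, zero_vecMul, zero_dotProduct, zero_add] at h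
    rw [hval0, Matrix.sub_apply, hq u] at h
    simpa [ht] using h
  -- optimality gives the comparison
  have hopt : b ⬝ᵥ A⁻¹ *ᵥ b ≤ u ⬝ᵥ A⁻¹ *ᵥ u := by
    have hfe : ∀ i, |(fun i => (u i - s i)) i| ≤ lam := fun i => hfeas (Sum.inl i) (Sum.inr ())
    have h := hγopt (fun i => u i - s i) hfe
    have he : ((fun i => S (Sum.inl i) (Sum.inr ())) + fun i => u i - s i) = u := by
      funext i; simp [hs]
    have he2 : ((fun i => S (Sum.inl i) (Sum.inr ())) + γ) = b := by
      funext i; simp [hb, hs]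
    rw [he, he2] at h
    linarith
  have hz22le : z22 ≤ d := by
    have := (abs_le.1 (hfeas (Sum.inr ()) (Sum.inr ()))).2
    simp only [hz22, hd]
    linarith
  have hschur : 0 < d - b ⬝ᵥ A⁻¹ *ᵥ b := by linarith
  -- rewrite the goal matrix in Bᴴ form
  have hgoal : (Matrix.fromBlocks A
      (Matrix.of fun i (_ : Unit) => S (Sum.inl i) (Sum.inr ()) + γ i)
      (Matrix.of fun (_ : Unit) j => S (Sum.inl j) (Sum.inr ()) + γ j)
      (Matrix.of fun (_ : Unit) (_ : Unit) => S (Sum.inr ()) (Sum.inr ()) + lam))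
      = fromBlocks A (replicateCol Unit b) (replicateCol Unit b)ᴴ (of fun _ _ => d) := by
    ext i j
    rcases i with i | i <;> rcases j with j | j <;>
      simp [hb, hs, hd, conjTranspose_apply]
  rw [hgoal]
  refine posDef_iff_dotProduct_mulVec.mpr ⟨?_, ?_⟩
  · refine (IsHermitian.fromBlocks₁₁ _ _ hA.1).2 ?_
    ext ⟨⟩ ⟨⟩
    simp [conjTranspose_apply]
  · intro x hx
    have hxe : x = (x ∘ Sum.inl) ⊕ᵥ (x ∘ Sum.inr) := by
      funext i; cases i <;> rfl
    rw [hxe, dotProduct_mulVec,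
      schur_complement_eq₁₁ (replicateCol Unit b) (of fun _ _ => d) _ _ hA.1]
    set w := (x ∘ Sum.inl) + (A⁻¹ * replicateCol Unit b) *ᵥ (x ∘ Sum.inr) with hw
    set y := x ∘ Sum.inr with hy
    have hterm2 : star y ᵥ* ((of fun _ _ => d) - (replicateCol Unit b)ᴴ * A⁻¹ * replicateCol Unit b) ⬝ᵥ y
        = y () * y () * (d - b ⬝ᵥ A⁻¹ *ᵥ b) := by
      rw [hval0, Matrix.sub_apply, hq b, of_apply]
    rw [hterm2]
    have hterm1 : star w ᵥ* A ⬝ᵥ w = w ⬝ᵥ A *ᵥ w := by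
      rw [← dotProduct_mulVec]; rfl
    by_cases hy0 : y () = 0
    · have hyz : y = 0 := funext fun i => by cases i; exact hy0
      have hwx : w = x ∘ Sum.inl := by
        rw [hw, hyz]; simp
      have hxl : x ∘ Sum.inl ≠ 0 := by
        intro h
        apply hx
        funext i
        cases i with
        | inl i => exact congrFun h i
        | inr i => cases i; exact hy0
      have hpos := hA.dotProduct_mulVec_pos hxl
      rw [hterm1, hwx]
      simp only [hy0, mul_zero, zero_mul, add_zero]
      exact hpos
    · have h1 : 0 ≤ star w ᵥ* A ⬝ᵥ w := by
        rw [hterm1]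
        exact hA.posSemidef.dotProduct_mulVec_nonneg w
      have h2 : 0 < y () * y () * (d - b ⬝ᵥ A⁻¹ *ᵥ b) :=
        mul_pos (mul_self_pos.2 hy0) hschur
      linarith
end

section
/- Let S be symmetric with s₂₂ + λ > 0 for λ > 0. Let Φ be a symmetric positive definite p×p matrix, and update its last row/column: keep Φ₁₁ fixed, set θ̂₁₂ arbitrary in ℝ^{p-1}, θ̂₂₁ = θ̂₁₂ᵀ, and θ̂₂₂ = 1/(s₂₂ + λ) + θ̂₂₁Φ₁₁⁻¹θ̂₁₂. Then the updated matrix Θ̂ is positive definite. -/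
open Matrix

open scoped Matrix in
lemma posDef_fromBlocks₁₁ {m n : Type*} [Fintype m] [DecidableEq m] [Fintype n]
    {A : Matrix m m ℝ} (B : Matrix m n ℝ) (D : Matrix n n ℝ) (hA : A.PosDef)
    [Invertible A] (hS : (D - Bᴴ * A⁻¹ * B).PosDef) :
    (Matrix.fromBlocks A B Bᴴ D).PosDef := by
  have hD : D.IsHermitian := by
    have := hS.1.add (Matrix.isHermitian_conjTranspose_mul_mul B hA.1.inv)
    simpa using this
  refine Matrix.PosDef.of_dotProduct_mulVec_pos ?_ ?_
  · exact Matrix.isHermitian_fromBlocks_iff.2 ⟨hA.1, rfl, rfl, hD⟩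
  · intro z hz
    have hz' : z = (z ∘ Sum.inl) ⊕ᵥ (z ∘ Sum.inr) := (Sum.elim_comp_inl_inr z).symm
    have hstar1 : star ((z ∘ Sum.inl) ⊕ᵥ (z ∘ Sum.inr)) = (z ∘ Sum.inl) ⊕ᵥ (z ∘ Sum.inr) :=
      funext fun i => star_trivial _
    have hstar2 : star z = z := funext fun i => star_trivial _
    have key := Matrix.schur_complement_eq₁₁ B D (z ∘ Sum.inl) (z ∘ Sum.inr) hA.1
    rw [hstar1] at key
    have hgoal : star z ⬝ᵥ (Matrix.fromBlocks A B Bᴴ D) *ᵥ z =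
        star ((z ∘ Sum.inl) + (A⁻¹ * B) *ᵥ (z ∘ Sum.inr)) ᵥ* A ⬝ᵥ
          ((z ∘ Sum.inl) + (A⁻¹ * B) *ᵥ (z ∘ Sum.inr)) +
        star (z ∘ Sum.inr) ᵥ* (D - Bᴴ * A⁻¹ * B) ⬝ᵥ (z ∘ Sum.inr) := by
      rw [hstar2, dotProduct_mulVec]
      conv_lhs => rw [hz']
      exact key
    rw [hgoal]
    by_cases hy : (z ∘ Sum.inr) = 0
    · have hx : (z ∘ Sum.inl) ≠ 0 := by
        intro hx
        apply hz
        rw [hz', hx, hy]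
        ext (i | i) <;> simp
      have h1 : 0 < star ((z ∘ Sum.inl) + (A⁻¹ * B) *ᵥ (z ∘ Sum.inr)) ᵥ* A ⬝ᵥ
          ((z ∘ Sum.inl) + (A⁻¹ * B) *ᵥ (z ∘ Sum.inr)) := by
        have := hA.dotProduct_mulVec_pos (x := (z ∘ Sum.inl) + (A⁻¹ * B) *ᵥ (z ∘ Sum.inr)) (by simp [hy, hx])
        rwa [dotProduct_mulVec] at this
      have h2 : 0 ≤ star (z ∘ Sum.inr) ᵥ* (D - Bᴴ * A⁻¹ * B) ⬝ᵥ (z ∘ Sum.inr) := by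
        have := hS.posSemidef.dotProduct_mulVec_nonneg (z ∘ Sum.inr)
        rwa [dotProduct_mulVec] at this
      linarith
    · have h1 : 0 ≤ star ((z ∘ Sum.inl) + (A⁻¹ * B) *ᵥ (z ∘ Sum.inr)) ᵥ* A ⬝ᵥ
          ((z ∘ Sum.inl) + (A⁻¹ * B) *ᵥ (z ∘ Sum.inr)) := by
        have := hA.posSemidef.dotProduct_mulVec_nonneg ((z ∘ Sum.inl) + (A⁻¹ * B) *ᵥ (z ∘ Sum.inr))
        rwa [dotProduct_mulVec] at this
      have h2 : 0 < star (z ∘ Sum.inr) ᵥ* (D - Bᴴ * A⁻¹ * B) ⬝ᵥ (z ∘ Sum.inr) := by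
        have := hS.dotProduct_mulVec_pos hy
        rwa [dotProduct_mulVec] at this
      linarith

theorem stmt9 {n : ℕ} (Φ : Matrix (Fin n ⊕ Unit) (Fin n ⊕ Unit) ℝ)
    (s22 lam : ℝ) (hlam : 0 < lam) (hs : 0 < s22 + lam) (hΦ : Φ.PosDef)
    (θ12 : Fin n → ℝ) :
    (Matrix.fromBlocks Φ.toBlocks₁₁
      (Matrix.of fun i (_ : Unit) => θ12 i)
      (Matrix.of fun (_ : Unit) j => θ12 j)
      (Matrix.of fun (_ : Unit) (_ : Unit) =>
        (s22 + lam)⁻¹ + θ12 ⬝ᵥ (Φ.toBlocks₁₁)⁻¹.mulVec θ12)).PosDef := by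
  have hA : Φ.toBlocks₁₁.PosDef := by
    refine Matrix.PosDef.of_dotProduct_mulVec_pos ?_ ?_
    · ext i j
      simpa [Matrix.toBlocks₁₁] using congrFun (congrFun hΦ.1 (Sum.inl i)) (Sum.inl j)
    · intro x hx
      have := hΦ.dotProduct_mulVec_pos (x := Sum.elim x 0) (by
        intro h
        apply hx
        ext i
        exact congrFun h (Sum.inl i))
      convert this using 1
      simp [Matrix.mulVec, dotProduct, Fintype.sum_sum_type, Matrix.toBlocks₁₁]
  haveI : Invertible Φ.toBlocks₁₁ := hA.isUnit.invertible
  have hB : (Matrix.of fun (_ : Unit) j => θ12 j) =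
      (Matrix.of fun i (_ : Unit) => θ12 i)ᴴ := by
    ext i j; simp
  rw [hB]
  refine posDef_fromBlocks₁₁ _ _ hA ?_
  refine Matrix.PosDef.of_dotProduct_mulVec_pos ?_ ?_
  · constructor
  · intro x hx
    have hx0 : x () ≠ 0 := fun h => hx (funext fun u => by cases u; exact h)
    have heq : ((Matrix.of fun (_ : Unit) (_ : Unit) =>
        (s22 + lam)⁻¹ + θ12 ⬝ᵥ (Φ.toBlocks₁₁)⁻¹.mulVec θ12) -
        (Matrix.of fun i (_ : Unit) => θ12 i)ᴴ * (Φ.toBlocks₁₁)⁻¹ *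
        (Matrix.of fun i (_ : Unit) => θ12 i)) =
        Matrix.of fun (_ : Unit) (_ : Unit) => (s22 + lam)⁻¹ := by
      ext u v
      simp only [Matrix.sub_apply, Matrix.of_apply, Matrix.mul_apply,
        Matrix.conjTranspose_apply, Matrix.mulVec, dotProduct, star_trivial,
        Finset.sum_mul, Finset.mul_sum]
      have hswap : (∑ i : Fin n, ∑ j : Fin n, θ12 j * (Φ.toBlocks₁₁)⁻¹ j i * θ12 i)
          = ∑ i : Fin n, ∑ j : Fin n, θ12 i * ((Φ.toBlocks₁₁)⁻¹ i j * θ12 j) := by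
        rw [Finset.sum_comm]
        exact Finset.sum_congr rfl fun i _ => Finset.sum_congr rfl fun j _ => by ring
      rw [hswap]
      ring
    rw [heq]
    have hval : star x ⬝ᵥ (Matrix.of fun (_ : Unit) (_ : Unit) => (s22 + lam)⁻¹).mulVec x
        = (s22 + lam)⁻¹ * (x () * x ()) := by
      simp [Matrix.mulVec, dotProduct, mul_comm, mul_assoc]
    rw [hval]
    exact mul_pos (inv_pos.mpr hs) (mul_self_pos.mpr hx0)
end

section
/- Let Θ₁₁ be a symmetric positive definite (p-1)×(p-1) matrix, s₁₂ ∈ ℝ^{p-1}, λ > 0, and w₂₂ > 0. A vector α minimizes (1/2)αᵀΘ₁₁⁻¹α + αᵀs₁₂ + λ‖α‖₁ if and only if there exists γ with ‖γ‖_∞ ≤ λ minimizing the box-constrained QP (1/2)(s₁₂+γ)ᵀΘ₁₁(s₁₂+γ) over ‖γ‖_∞ ≤ λ such that α = -Θ₁₁(s₁₂ + γ). -/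
open Matrix

variable {q : ℕ}

lemma dp13_symm (M : Matrix (Fin q) (Fin q) ℝ) (hM : Mᵀ = M) (x y : Fin q → ℝ) :
    x ⬝ᵥ M.mulVec y = y ⬝ᵥ M.mulVec x := by
  rw [dotProduct_mulVec, ← vecMul_transpose, dotProduct_comm, hM]

lemma dp13_expand (M : Matrix (Fin q) (Fin q) ℝ) (hM : Mᵀ = M) (x y : Fin q → ℝ) :
    (x + y) ⬝ᵥ M.mulVec (x + y) =
      x ⬝ᵥ M.mulVec x + 2 * (x ⬝ᵥ M.mulVec y) + y ⬝ᵥ M.mulVec y := by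
  rw [mulVec_add, dotProduct_add, add_dotProduct, add_dotProduct, dp13_symm M hM y x]
  ring

lemma dp13_sum_abs (x : Fin q → ℝ) (i : Fin q) (t : ℝ) :
    ∑ j, |x j + (Pi.single i t : Fin q → ℝ) j| = (∑ j, |x j|) + (|x i + t| - |x i|) := by
  have h : ∑ j, (|x j + (Pi.single i t : Fin q → ℝ) j| - |x j|) = |x i + t| - |x i| := by
    rw [Finset.sum_eq_single i]
    · simp
    · intro j _ hj; simp [Ne.symm hj]
    · simp
  rw [Finset.sum_sub_distrib] at h
  linarith

lemma dp13_diag_pos {M : Matrix (Fin q) (Fin q) ℝ} (hM : M.PosDef) (i : Fin q) :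
    0 < M i i := by
  have := hM.re_dotProduct_pos (x := Pi.single i 1)
    (by intro h; have := congrFun h i; simp at this)
  simpa using this

lemma dp13_quad_nonneg {M : Matrix (Fin q) (Fin q) ℝ} (hM : M.PosDef) (x : Fin q → ℝ) :
    0 ≤ x ⬝ᵥ M.mulVec x := by
  simpa using hM.posSemidef.re_dotProduct_nonneg x

lemma dp13_primal_KKT (c d a lam : ℝ) (hc : 0 < c) (hlam : 0 < lam)
    (K : ∀ t : ℝ, 0 ≤ t * d + t ^ 2 / 2 * c + lam * (|a + t| - |a|)) :
    |d| ≤ lam ∧ -d * a = lam * |a| := by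
  have habs : ∀ t : ℝ, |a + t| - |a| ≤ |t| := by
    intro t
    have := abs_sub_abs_le_abs_sub (a + t) a
    simpa using this
  have hK' : ∀ t : ℝ, 0 ≤ t * d + t ^ 2 / 2 * c + lam * |t| := by
    intro t
    have h2 := mul_le_mul_of_nonneg_left (habs t) hlam.le
    nlinarith [K t]
  have hd1 : d ≤ lam := by
    apply le_of_forall_pos_le_add
    intro ε hε
    set u : ℝ := 2 * ε / c with hu_def
    have hu : 0 < u := by positivity
    have h3 := hK' (-u)
    rw [abs_neg, abs_of_pos hu] at h3
    have huc : u * c = 2 * ε := by rw [hu_def, div_mul_cancel₀ _ hc.ne']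
    nlinarith
  have hd2 : -lam ≤ d := by
    rw [neg_le]
    apply le_of_forall_pos_le_add
    intro ε hε
    set u : ℝ := 2 * ε / c with hu_def
    have hu : 0 < u := by positivity
    have h3 := hK' u
    rw [abs_of_pos hu] at h3
    have huc : u * c = 2 * ε := by rw [hu_def, div_mul_cancel₀ _ hc.ne']
    nlinarith
  refine ⟨abs_le.mpr ⟨by linarith, hd1⟩, ?_⟩
  rcases lt_trichotomy a 0 with ha | ha | ha
  · -- a < 0 : show d = lam
    have hdl : lam ≤ d := by
      apply le_of_forall_pos_le_add
      intro ε hε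
      set u : ℝ := min (-a / 2) (2 * ε / c) with hu_def
      have hu : 0 < u := lt_min (by linarith) (by positivity)
      have hua : u ≤ -a / 2 := min_le_left _ _
      have huc : u * c ≤ 2 * ε := by
        have h4 := min_le_right (-a / 2) (2 * ε / c)
        calc u * c ≤ (2 * ε / c) * c := by nlinarith
          _ = 2 * ε := div_mul_cancel₀ _ hc.ne'
      have h3 := K u
      have he : |a + u| - |a| = -u := by
        rw [abs_of_neg ha, abs_of_neg (by linarith : a + u < 0)]; ring
      rw [he] at h3
      nlinarith [mul_le_mul_of_nonneg_left huc hu.le]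
    have hde : d = lam := le_antisymm hd1 hdl
    rw [hde, abs_of_neg ha]; ring
  · simp [ha]
  · -- a > 0 : show d = -lam
    have hdl : d ≤ -lam := by
      apply le_of_forall_pos_le_add
      intro ε hε
      set u : ℝ := min (a / 2) (2 * ε / c) with hu_def
      have hu : 0 < u := lt_min (by linarith) (by positivity)
      have hua : u ≤ a / 2 := min_le_left _ _
      have huc : u * c ≤ 2 * ε := by
        have h4 := min_le_right (a / 2) (2 * ε / c)
        calc u * c ≤ (2 * ε / c) * c := by nlinarith
          _ = 2 * ε := div_mul_cancel₀ _ hc.ne'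
      have h3 := K (-u)
      have he : |a + -u| - |a| = -u := by
        rw [abs_of_pos ha, abs_of_pos (by linarith : 0 < a + -u)]; ring
      rw [he] at h3
      nlinarith [mul_le_mul_of_nonneg_left huc hu.le]
    have hde : d = -lam := le_antisymm hdl (by linarith)
    rw [hde, abs_of_pos ha]; ring

lemma dp13_dual_KKT (c a g lam : ℝ) (hc : 0 < c) (hlam : 0 < lam) (hg : |g| ≤ lam)
    (K : ∀ t : ℝ, |g + t| ≤ lam → 0 ≤ -(t * a) + t ^ 2 / 2 * c) :
    g * a = lam * |a| := by
  obtain ⟨hg1, hg2⟩ := abs_le.mp hg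
  rcases lt_trichotomy a 0 with ha | ha | ha
  · -- show g = -lam
    have hgl : g ≤ -lam := by
      apply le_of_forall_pos_le_add
      intro ε hε
      by_contra h
      push_neg at h
      set u : ℝ := min (-a / (2 * c)) ε with hu_def
      have hu : 0 < u := lt_min (div_pos (by linarith) (by positivity)) hε
      have hue : u ≤ ε := min_le_right _ _
      have hua : u * c ≤ -a / 2 := by
        have h4 := min_le_left (-a / (2 * c)) ε
        calc u * c ≤ (-a / (2 * c)) * c := by nlinarith
          _ = -a / 2 := by field_simp
      have hfeas : |g + -u| ≤ lam := abs_le.mpr ⟨by linarith, by linarith⟩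
      have h3 := K (-u) hfeas
      nlinarith
    have hge : g = -lam := le_antisymm hgl (by linarith)
    rw [hge, abs_of_neg ha]; ring
  · simp [ha]
  · -- show g = lam
    have hgl : lam ≤ g := by
      apply le_of_forall_pos_le_add
      intro ε hε
      by_contra h
      push_neg at h
      set u : ℝ := min (a / (2 * c)) ε with hu_def
      have hu : 0 < u := lt_min (div_pos (by linarith) (by positivity)) hε
      have hue : u ≤ ε := min_le_right _ _
      have hua : u * c ≤ a / 2 := by
        have h4 := min_le_left (a / (2 * c)) ε
        calc u * c ≤ (a / (2 * c)) * c := by nlinarith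
          _ = a / 2 := by field_simp
      have hfeas : |g + u| ≤ lam := abs_le.mpr ⟨by linarith, by linarith⟩
      have h3 := K u hfeas
      nlinarith
    have hge : g = lam := le_antisymm hg2 hgl
    rw [hge, abs_of_pos ha]

open Matrix

theorem stmt13 {q : ℕ} (Θ11 : Matrix (Fin q) (Fin q) ℝ) (s : Fin q → ℝ)
    (lam w22 : ℝ) (hΘ11 : Θ11.PosDef) (hlam : 0 < lam) (hw22 : 0 < w22)
    (α : Fin q → ℝ) :
    (∀ α' : Fin q → ℝ,
        (1/2) * (α ⬝ᵥ Θ11⁻¹.mulVec α) + α ⬝ᵥ s + lam * ∑ i, |α i| ≤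
        (1/2) * (α' ⬝ᵥ Θ11⁻¹.mulVec α') + α' ⬝ᵥ s + lam * ∑ i, |α' i|) ↔
    (∃ γ : Fin q → ℝ, (∀ i, |γ i| ≤ lam) ∧
        (∀ γ' : Fin q → ℝ, (∀ i, |γ' i| ≤ lam) →
          (1/2) * ((s + γ) ⬝ᵥ Θ11.mulVec (s + γ)) ≤
          (1/2) * ((s + γ') ⬝ᵥ Θ11.mulVec (s + γ'))) ∧
        α = -(Θ11.mulVec (s + γ))) := by
  have hdet : IsUnit Θ11.det := (isUnit_iff_isUnit_det Θ11).mp hΘ11.isUnit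
  have hAs : Θ11ᵀ = Θ11 := (by simpa using hΘ11.isHermitian : Θ11.IsSymm)
  have hB : (Θ11⁻¹).PosDef := hΘ11.inv
  have hBs : (Θ11⁻¹)ᵀ = Θ11⁻¹ := (by simpa using hB.isHermitian : (Θ11⁻¹).IsSymm)
  constructor
  · intro hmin
    have K : ∀ (i : Fin q) (t : ℝ),
        0 ≤ t * ((Θ11⁻¹ *ᵥ α) i + s i) + t ^ 2 / 2 * Θ11⁻¹ i i
            + lam * (|α i + t| - |α i|) := by
      intro i t
      have h := hmin (α + (Pi.single i t : Fin q → ℝ))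
      have e1 : (α + (Pi.single i t : Fin q → ℝ)) ⬝ᵥ Θ11⁻¹ *ᵥ (α + (Pi.single i t : Fin q → ℝ))
          = α ⬝ᵥ Θ11⁻¹ *ᵥ α + 2 * (t * (Θ11⁻¹ *ᵥ α) i) + t * (Θ11⁻¹ i i * t) := by
        rw [dp13_expand _ hBs, dp13_symm _ hBs α ((Pi.single i t : Fin q → ℝ))]
        simp [single_dotProduct]
        left; ring
      have e2 : (α + (Pi.single i t : Fin q → ℝ)) ⬝ᵥ s = α ⬝ᵥ s + t * s i := by
        simp [add_dotProduct, single_dotProduct]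
      have e3 : ∑ j, |(α + (Pi.single i t : Fin q → ℝ)) j| = (∑ j, |α j|) + (|α i + t| - |α i|) := by
        simpa using dp13_sum_abs α i t
      rw [e1, e2, e3] at h
      nlinarith [h]
    have hKKT : ∀ i, |(Θ11⁻¹ *ᵥ α) i + s i| ≤ lam ∧
        -((Θ11⁻¹ *ᵥ α) i + s i) * α i = lam * |α i| :=
      fun i => dp13_primal_KKT _ _ _ _ (dp13_diag_pos hB i) hlam (K i)
    set γ : Fin q → ℝ := -(Θ11⁻¹ *ᵥ α + s) with hγdef
    have hγi : ∀ i, γ i = -((Θ11⁻¹ *ᵥ α) i + s i) := by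
      intro i; simp [hγdef]
    have hsg : s + γ = -(Θ11⁻¹ *ᵥ α) := by
      rw [hγdef]; abel
    have hmv : Θ11 *ᵥ (s + γ) = -α := by
      rw [hsg, mulVec_neg, mulVec_mulVec, mul_nonsing_inv _ hdet, one_mulVec]
    refine ⟨γ, ?_, ?_, ?_⟩
    · intro i
      rw [hγi i, abs_neg]
      exact (hKKT i).1
    · intro γ' hγ'
      have hexp := dp13_expand Θ11 hAs (s + γ) (γ' - γ)
      have heq : s + γ + (γ' - γ) = s + γ' := by abel
      rw [heq] at hexp
      have hcross : (s + γ) ⬝ᵥ Θ11 *ᵥ (γ' - γ) = (γ' - γ) ⬝ᵥ (-α) := by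
        rw [dp13_symm _ hAs, hmv]
      have hquad : 0 ≤ (γ' - γ) ⬝ᵥ Θ11 *ᵥ (γ' - γ) := dp13_quad_nonneg hΘ11 _
      have hsum : 0 ≤ (γ' - γ) ⬝ᵥ (-α) := by
        rw [dotProduct]
        apply Finset.sum_nonneg
        intro i _
        simp only [Pi.sub_apply, Pi.neg_apply]
        have h1 := (hKKT i).2
        have hg'i : γ' i * α i ≤ lam * |α i| := by
          calc γ' i * α i ≤ |γ' i * α i| := le_abs_self _
            _ = |γ' i| * |α i| := abs_mul _ _
            _ ≤ lam * |α i| := mul_le_mul_of_nonneg_right (hγ' i) (abs_nonneg _)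
        rw [hγi i]
        nlinarith [h1, hg'i]
      rw [hexp, hcross]
      linarith
    · rw [hmv, neg_neg]
  · rintro ⟨γ, hfe, hopt, hα⟩
    have hmv : Θ11 *ᵥ (s + γ) = -α := by rw [hα, neg_neg]
    have hBα : Θ11⁻¹ *ᵥ α = -(s + γ) := by
      rw [hα, mulVec_neg, mulVec_mulVec, nonsing_inv_mul _ hdet, one_mulVec]
    have Kd : ∀ (i : Fin q) (t : ℝ), |γ i + t| ≤ lam →
        0 ≤ -(t * α i) + t ^ 2 / 2 * Θ11 i i := by
      intro i t hft
      have hfeas : ∀ j, |(γ + (Pi.single i t : Fin q → ℝ)) j| ≤ lam := by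
        intro j
        by_cases hj : j = i
        · subst hj; simpa using hft
        · simpa [Pi.single_eq_of_ne hj] using hfe j
      have h := hopt (γ + (Pi.single i t : Fin q → ℝ)) hfeas
      have heq : s + (γ + (Pi.single i t : Fin q → ℝ)) = (s + γ) + (Pi.single i t : Fin q → ℝ) := by abel
      rw [heq, dp13_expand Θ11 hAs (s + γ) ((Pi.single i t : Fin q → ℝ))] at h
      have hc1 : (s + γ) ⬝ᵥ Θ11 *ᵥ (Pi.single i t : Fin q → ℝ) = t * (-α) i := by
        rw [dp13_symm _ hAs, hmv, single_dotProduct]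
      have hc2 : (Pi.single i t : Fin q → ℝ) ⬝ᵥ Θ11 *ᵥ (Pi.single i t : Fin q → ℝ) = t * (Θ11 i i * t) := by
        simp [single_dotProduct]
        left; ring
      rw [hc1, hc2] at h
      simp only [Pi.neg_apply] at h
      nlinarith [h]
    have hcomp : ∀ i, γ i * α i = lam * |α i| :=
      fun i => dp13_dual_KKT _ _ _ _ (dp13_diag_pos hΘ11 i) hlam (hfe i) (Kd i)
    intro α'
    have hexp := dp13_expand _ hBs α (α' - α)
    have heq : α + (α' - α) = α' := by abel
    rw [heq] at hexp
    have hcross : α ⬝ᵥ Θ11⁻¹ *ᵥ (α' - α) = (α' - α) ⬝ᵥ -(s + γ) := by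
      rw [dp13_symm _ hBs, hBα]
    have hquad : 0 ≤ (α' - α) ⬝ᵥ Θ11⁻¹ *ᵥ (α' - α) := dp13_quad_nonneg hB _
    have hsum : γ ⬝ᵥ α' - γ ⬝ᵥ α ≤ lam * (∑ i, |α' i|) - lam * (∑ i, |α i|) := by
      have h1 : ∀ i ∈ Finset.univ, γ i * α' i - γ i * α i ≤ lam * |α' i| - lam * |α i| := by
        intro i _
        have hg'i : γ i * α' i ≤ lam * |α' i| := by
          calc γ i * α' i ≤ |γ i * α' i| := le_abs_self _
            _ = |γ i| * |α' i| := abs_mul _ _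
            _ ≤ lam * |α' i| := mul_le_mul_of_nonneg_right (hfe i) (abs_nonneg _)
        linarith [hcomp i]
      have h2 := Finset.sum_le_sum h1
      simpa [Finset.sum_sub_distrib, Finset.mul_sum, dotProduct] using h2
    have hd : (α' - α) ⬝ᵥ -(s + γ) = (α ⬝ᵥ s - α' ⬝ᵥ s) + (γ ⬝ᵥ α - γ ⬝ᵥ α') := by
      rw [dotProduct_neg, dotProduct_add, sub_dotProduct, sub_dotProduct,
        dotProduct_comm α' γ, dotProduct_comm α γ]
      ring
    rw [hexp, hcross, hd]
    linarith
end

section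
/- Let S be symmetric, λ > 0, and suppose λ ≥ max_{i≠j} |sᵢⱼ| and sᵢᵢ + λ > 0 for all i. Then the diagonal matrix Θ = diag(1/(s₁₁+λ), …, 1/(s_pp+λ)) satisfies the stationarity condition -Θ⁻¹ + S + λΓ = 0 for some Γ with Γ ∈ Sign(Θ) element-wise, i.e., Θ solves the graphical lasso problem and the solution is diagonal. -/
open Matrix

theorem stmt14 {p : ℕ} (S : Matrix (Fin p) (Fin p) ℝ) (lam : ℝ)
    (hS : S.IsSymm) (hlam : 0 < lam)
    (hbig : ∀ i j, i ≠ j → |S i j| ≤ lam)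
    (hdiag : ∀ i, 0 < S i i + lam) :
    (Matrix.diagonal fun i => (S i i + lam)⁻¹).PosDef ∧
    ∃ Γ : Matrix (Fin p) (Fin p) ℝ,
      (∀ i j, Γ i j ∈ signSet ((Matrix.diagonal fun k => (S k k + lam)⁻¹) i j)) ∧
      -(Matrix.diagonal fun i => (S i i + lam)⁻¹)⁻¹ + S + lam • Γ = 0 := by
  constructor
  · rw [Matrix.posDef_diagonal_iff]
    exact fun i => inv_pos.mpr (hdiag i)
  · refine ⟨Matrix.of fun i j => if i = j then 1 else -(S i j) / lam, fun i j => ?_, ?_⟩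
    · by_cases h : i = j
      · subst h
        simp only [Matrix.of_apply, if_pos rfl, Matrix.diagonal_apply_eq, signSet]
        rw [if_neg (inv_pos.mpr (hdiag i)).ne']
        simp [Real.sign_of_pos (inv_pos.mpr (hdiag i))]
      · simp only [Matrix.of_apply, if_neg h, Matrix.diagonal_apply_ne _ h, signSet, if_pos rfl,
          Set.mem_Icc]
        have h2 : |(-(S i j)) / lam| ≤ 1 := by
          rw [abs_div, abs_neg, abs_of_pos hlam]
          exact div_le_one_of_le₀ (hbig i j h) hlam.le
        exact abs_le.mp h2
    · have hinv : (Matrix.diagonal fun i => (S i i + lam)⁻¹)⁻¹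
          = Matrix.diagonal (fun i => S i i + lam) := by
        apply Matrix.inv_eq_right_inv
        rw [Matrix.diagonal_mul_diagonal]
        convert Matrix.diagonal_one using 2
        funext i
        exact inv_mul_cancel₀ (hdiag i).ne'
      rw [hinv]
      ext i j
      by_cases h : i = j
      · subst h
        simp only [Matrix.add_apply, Matrix.neg_apply, Matrix.smul_apply, Matrix.of_apply,
          Matrix.diagonal_apply_eq, Matrix.zero_apply, if_pos rfl, smul_eq_mul, if_true,
          eq_self_iff_true]
        ring
      · simp only [Matrix.add_apply, Matrix.neg_apply, Matrix.smul_apply, Matrix.of_apply,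
          Matrix.diagonal_apply_ne _ h, Matrix.zero_apply, if_neg h, smul_eq_mul, neg_zero,
          zero_add]
        field_simp
        ring
end
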